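/- arXiv:1505.01653 — 3 statements merged into one kernel-verified Lean document; each statement's English description precedes it below -/
import Mathlib

section
/- Let α, β > -1 with α+β ≠ -1, p ∈ E(α,β), and 0 < s < t. Then the potential spaces are nested: 𝓛^{p,t}_{α,β}(-π,π) ⊆ 𝓛^{p,s}_{α,β}(-π,π) ⊆ L^p(-π,π), with continuous inclusions ‖f‖_{𝓛^{p,s}} ≲ ‖f‖_{𝓛^{p,t}} and ‖f‖_{L^p} ≲ ‖f‖_{𝓛^{p,s}}. -/
open MeasureTheory Set Real
open scoped ENNReal NNReal

/-- The upper endpoint `p(α,β)` of the interval `E(α,β)`. -/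
noncomputable def pMaxJ (α β : ℝ) : ℝ≥0∞ :=
  if -(1 / 2 : ℝ) ≤ α ∧ -(1 / 2 : ℝ) ≤ β then ⊤
  else ENNReal.ofReal (-1 / min (α + 1 / 2) (β + 1 / 2))

/-- The lower endpoint `p'(α,β)` (conjugate exponent of `p(α,β)`). -/
noncomputable def pMinJ (α β : ℝ) : ℝ :=
  if -(1 / 2 : ℝ) ≤ α ∧ -(1 / 2 : ℝ) ≤ β then 1
  else (pMaxJ α β).toReal / ((pMaxJ α β).toReal - 1)

/-- `p ∈ E(α,β) = (p'(α,β), p(α,β))`. -/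
def memEJ (α β p : ℝ) : Prop := pMinJ α β < p ∧ ENNReal.ofReal p < pMaxJ α β

/-- Let `α, β > -1` with `α+β ≠ -1`, `p ∈ E(α,β)` and `0 < s < t`.  Model
`L^p(-π,π)` by a normed space `E` and the potentials `𝕃_{α,β}^{-σ}` by bounded injective
operators `T σ` satisfying the semigroup law.  Then the potential spaces
`𝓛^{p,u} = range T(u/2)` (with norm `‖T(u/2)g‖_{𝓛^{p,u}} = ‖g‖`) are nested:
`𝓛^{p,t} ⊆ 𝓛^{p,s} ⊆ L^p`, with continuous inclusions `‖f‖_{𝓛^{p,s}} ≲ ‖f‖_{𝓛^{p,t}}`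
and `‖f‖_{L^p} ≲ ‖f‖_{𝓛^{p,s}}`. -/
theorem stmt13 (α β p s t : ℝ) (hα : -1 < α) (hβ : -1 < β) (hne : α + β ≠ -1)
    (hp : memEJ α β p) (hs : 0 < s) (hst : s < t)
    (E : Type*) [NormedAddCommGroup E] [NormedSpace ℂ E]
    (T : ℝ → E →L[ℂ] E)
    (hsem : ∀ σ τ : ℝ, 0 < σ → 0 < τ → ∀ f : E, T σ (T τ f) = T (σ + τ) f)
    (hinj : ∀ σ : ℝ, 0 < σ → Function.Injective (T σ)) :
    Set.range (T (t / 2)) ⊆ Set.range (T (s / 2))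
    ∧ (∃ C : ℝ, 0 < C ∧ ∀ g h : E, T (s / 2) h = T (t / 2) g → ‖h‖ ≤ C * ‖g‖)
    ∧ (∃ C : ℝ, 0 < C ∧ ∀ g : E, ‖T (s / 2) g‖ ≤ C * ‖g‖) := by
  have hd : (0:ℝ) < (t - s) / 2 := by linarith
  have hs2 : (0:ℝ) < s / 2 := by linarith
  have key : ∀ g : E, T (t / 2) g = T (s / 2) (T ((t - s) / 2) g) := by
    intro g
    rw [hsem _ _ hs2 hd, show s / 2 + (t - s) / 2 = t / 2 by ring]
  refine ⟨?_, ⟨‖T ((t - s) / 2)‖ + 1, by positivity, ?_⟩,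
    ⟨‖T (s / 2)‖ + 1, by positivity, ?_⟩⟩
  · rintro f ⟨g, rfl⟩
    exact ⟨T ((t - s) / 2) g, (key g).symm⟩
  · intro g h he
    have : h = T ((t - s) / 2) g := hinj _ hs2 (by rw [he, key])
    subst this
    calc ‖T ((t - s) / 2) g‖ ≤ ‖T ((t - s) / 2)‖ * ‖g‖ := (T _).le_opNorm g
      _ ≤ (‖T ((t - s) / 2)‖ + 1) * ‖g‖ := by nlinarith [norm_nonneg g]
  · intro g
    calc ‖T (s / 2) g‖ ≤ ‖T (s / 2)‖ * ‖g‖ := (T _).le_opNorm g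
      _ ≤ (‖T (s / 2)‖ + 1) * ‖g‖ := by nlinarith [norm_nonneg g]
end

section
/- Let α, β > -1 with α+β ≠ -1, let p < q with p, q ∈ E(α,β), and s > 0. Then 𝓛^{q,s}_{α,β}(-π,π) ⊆ 𝓛^{p,s}_{α,β}(-π,π) continuously, and the inclusion is proper: there exists f ∈ 𝓛^{p,s}_{α,β}(-π,π) \ 𝓛^{q,s}_{α,β}(-π,π). -/
/-!
On the finite measure space `(-π, π)` Hölder's inequality gives
`‖g‖_p ≤ |(-π,π)|^(1/p - 1/q) ‖g‖_q` (for arbitrary `g`, after passing to a measurable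
minorant with the same `L^p` norm), hence
`L^q ⊆ L^p` and `T(L^q) ⊆ T(L^p)`. The function `(x + π)^(-1/q)` lies in `L^p \ L^q`, and
injectivity of `T` on `L^p` keeps its image out of `T(L^q)`.
-/

open MeasureTheory Set Real
open scoped ENNReal NNReal

lemma one_le_pMinJ {α β : ℝ} (hα : -1 < α) (hβ : -1 < β) : 1 ≤ pMinJ α β := by
  unfold pMinJ pMaxJ
  split_ifs with h
  · exact le_rfl
  · set m := min (α + 1 / 2) (β + 1 / 2)
    have hm_neg : m < 0 := by
      rcases not_and_or.mp h with h' | h' <;> rw [not_le] at h'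
      · exact (min_le_left _ _).trans_lt (by linarith)
      · exact (min_le_right _ _).trans_lt (by linarith)
    have hm_gt : -(1 / 2 : ℝ) < m := lt_min (by linarith) (by linarith)
    have hpMax_gt : (2 : ℝ) < -1 / m := by rw [lt_div_iff_of_neg hm_neg]; linarith
    rw [ENNReal.toReal_ofReal (by linarith), le_div_iff₀ (by linarith)]
    linarith

namespace MeasureTheory

variable {α ε : Type*} [MeasurableSpace α] {μ : Measure α} [ENorm ε]

theorem exists_measurable_le_enorm_eLpNorm_eq (f : α → ε) {p : ℝ≥0∞} (hp : p ≠ ∞) :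
    ∃ k : α → ℝ≥0∞, Measurable k ∧ (∀ x, k x ≤ ‖f x‖ₑ) ∧ eLpNorm k p μ = eLpNorm f p μ := by
  rcases eq_or_ne p 0 with rfl | hp0
  · exact ⟨0, measurable_const, fun _ => zero_le, by simp⟩
  have hp_pos : 0 < p.toReal := ENNReal.toReal_pos hp0 hp
  obtain ⟨h, hh_meas, hh_le, hh_eq⟩ :=
    exists_measurable_le_lintegral_eq μ fun x => ‖f x‖ₑ ^ p.toReal
  refine ⟨fun x => h x ^ p.toReal⁻¹, hh_meas.pow_const _, fun x => ?_, ?_⟩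
  · calc h x ^ p.toReal⁻¹ ≤ (‖f x‖ₑ ^ p.toReal) ^ p.toReal⁻¹ := by gcongr; exact hh_le x
      _ = ‖f x‖ₑ := ENNReal.rpow_rpow_inv hp_pos.ne' _
  · simp only [eLpNorm_eq_lintegral_rpow_enorm_toReal hp0 hp, enorm_eq_self,
      ← ENNReal.rpow_mul, inv_mul_cancel₀ hp_pos.ne', ENNReal.rpow_one, hh_eq]

theorem eLpNorm_le_eLpNorm_mul_rpow_measure_univ' {p q : ℝ≥0∞} (hpq : p ≤ q) (f : α → ε) :
    eLpNorm f p μ ≤ eLpNorm f q μ * μ univ ^ (1 / p.toReal - 1 / q.toReal) := by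
  rcases eq_or_ne p ∞ with rfl | hp
  · simp [top_le_iff.mp hpq]
  obtain ⟨k, hk_meas, hk_le, hk_eq⟩ := exists_measurable_le_enorm_eLpNorm_eq (μ := μ) f hp
  calc eLpNorm f p μ = eLpNorm k p μ := hk_eq.symm
    _ ≤ eLpNorm k q μ * μ univ ^ (1 / p.toReal - 1 / q.toReal) :=
      eLpNorm_le_eLpNorm_mul_rpow_measure_univ hpq hk_meas.aestronglyMeasurable
    _ ≤ eLpNorm f q μ * μ univ ^ (1 / p.toReal - 1 / q.toReal) := by
      gcongr; exact eLpNorm_mono_enorm hk_le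

end MeasureTheory

theorem memLp_rpow_sub_Ioo_iff {𝕜 : Type*} [RCLike 𝕜] {a b p s : ℝ} (hab : a < b) (hp : 0 < p) :
    MemLp (fun x : ℝ => (((x - a) ^ s : ℝ) : 𝕜)) (ENNReal.ofReal p) (volume.restrict (Ioo a b))
      ↔ -1 < s * p := by
  have hmeas : AEStronglyMeasurable (fun x : ℝ => (((x - a) ^ s : ℝ) : 𝕜))
      (volume.restrict (Ioo a b)) :=
    (RCLike.continuous_ofReal.measurable.comp
      ((measurable_id.sub_const a).pow_const s)).aestronglyMeasurable
  rw [← integrable_norm_rpow_iff hmeas (by simpa using hp) ENNReal.ofReal_ne_top,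
    ENNReal.toReal_ofReal hp.le, ← IntegrableOn,
    integrableOn_congr_fun (g := fun x => (x - a) ^ (s * p)) ?_ measurableSet_Ioo,
    ← intervalIntegrable_iff_integrableOn_Ioo_of_le hab.le,
    ← intervalIntegral.integrableOn_Ioo_rpow_iff (sub_pos.2 hab),
    ← intervalIntegrable_iff_integrableOn_Ioo_of_le (sub_pos.2 hab).le,
    ← IntervalIntegrable.comp_sub_right_iff (f := fun x => x ^ (s * p)) (a := 0) (c := a),
    zero_add, sub_add_cancel]
  intro x hx
  dsimp only
  rw [RCLike.norm_ofReal, abs_of_pos (rpow_pos_of_pos (sub_pos.2 hx.1) s),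
    ← rpow_mul (sub_pos.2 hx.1).le]

theorem stmt14_general (α β p q : ℝ) (hα : -1 < α) (hβ : -1 < β)
    (hpq : p < q) (hpE : memEJ α β p)
    (T : (ℝ → ℂ) → (ℝ → ℂ))
    (hinj : ∀ g g', MemLp g (ENNReal.ofReal p) (volume.restrict (Ioo (-π) π)) →
      MemLp g' (ENNReal.ofReal p) (volume.restrict (Ioo (-π) π)) →
      T g =ᵐ[volume.restrict (Ioo (-π) π)] T g' →
      g =ᵐ[volume.restrict (Ioo (-π) π)] g') :
    (∀ f : ℝ → ℂ,
      (∃ g, MemLp g (ENNReal.ofReal q) (volume.restrict (Ioo (-π) π)) ∧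
        f =ᵐ[volume.restrict (Ioo (-π) π)] T g) →
      (∃ g, MemLp g (ENNReal.ofReal p) (volume.restrict (Ioo (-π) π)) ∧
        f =ᵐ[volume.restrict (Ioo (-π) π)] T g))
    ∧ (∃ C : ℝ≥0∞, C ≠ ⊤ ∧ ∀ g : ℝ → ℂ,
        eLpNorm g (ENNReal.ofReal p) (volume.restrict (Ioo (-π) π))
          ≤ C * eLpNorm g (ENNReal.ofReal q) (volume.restrict (Ioo (-π) π)))
    ∧ (∃ f : ℝ → ℂ,
        (∃ g, MemLp g (ENNReal.ofReal p) (volume.restrict (Ioo (-π) π)) ∧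
          f =ᵐ[volume.restrict (Ioo (-π) π)] T g)
        ∧ ¬(∃ g, MemLp g (ENNReal.ofReal q) (volume.restrict (Ioo (-π) π)) ∧
          f =ᵐ[volume.restrict (Ioo (-π) π)] T g)) := by
  have hp : 0 < p := zero_lt_one.trans_le (one_le_pMinJ hα hβ) |>.trans hpE.1
  have hq : 0 < q := hp.trans hpq
  have hle : ENNReal.ofReal p ≤ ENNReal.ofReal q := ENNReal.ofReal_le_ofReal hpq.le
  have hC : 0 ≤ 1 / (ENNReal.ofReal p).toReal - 1 / (ENNReal.ofReal q).toReal := by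
    rw [ENNReal.toReal_ofReal hp.le, ENNReal.toReal_ofReal hq.le, sub_nonneg]
    exact one_div_le_one_div_of_le hp hpq.le
  have hπ : -π < π := by linarith [pi_pos]
  have hg₀p := (memLp_rpow_sub_Ioo_iff (𝕜 := ℂ) (s := -q⁻¹) hπ hp).2 <| by
    rwa [neg_mul, neg_lt_neg_iff, inv_mul_lt_one₀ hq]
  have hg₀q := (memLp_rpow_sub_Ioo_iff (𝕜 := ℂ) (s := -q⁻¹) hπ hq).not.2 <| by
    rw [neg_mul, inv_mul_cancel₀ hq.ne']
    exact lt_irrefl _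
  refine ⟨fun f ⟨g, hg, hfg⟩ => ⟨g, hg.mono_exponent hle, hfg⟩,
    ⟨_, ENNReal.rpow_ne_top_of_nonneg hC (measure_ne_top _ univ),
      fun g => (eLpNorm_le_eLpNorm_mul_rpow_measure_univ' hle g).trans_eq (mul_comm _ _)⟩,
    _, ⟨_, hg₀p, .rfl⟩, ?_⟩
  rintro ⟨g, hgq, hTg⟩
  exact hg₀q (hgq.ae_eq (hinj _ g hg₀p (hgq.mono_exponent hle) hTg).symm)

/-- Let `α, β > -1` with `α+β ≠ -1`, `p < q` with `p, q ∈ E(α,β)`, `s > 0`,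
and let `T = 𝕃_{α,β}^{-s/2}` (injective modulo null sets on `L^p(-π,π)`).  Then
`𝓛^{q,s}_{α,β}(-π,π) = T(L^q) ⊆ T(L^p) = 𝓛^{p,s}_{α,β}(-π,π)` continuously (the potential
norms being `‖Tg‖ = ‖g‖_{L^r}`), and the inclusion is proper: some `f ∈ 𝓛^{p,s}` lies in
no `T(L^q)`-representation. -/
theorem stmt14 (α β p q s : ℝ) (hα : -1 < α) (hβ : -1 < β) (hne : α + β ≠ -1)
    (hpq : p < q) (hpE : memEJ α β p) (hqE : memEJ α β q) (hs : 0 < s)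
    (T : (ℝ → ℂ) → (ℝ → ℂ))
    (hinj : ∀ g g', MemLp g (ENNReal.ofReal p) (volume.restrict (Ioo (-π) π)) →
      MemLp g' (ENNReal.ofReal p) (volume.restrict (Ioo (-π) π)) →
      T g =ᵐ[volume.restrict (Ioo (-π) π)] T g' →
      g =ᵐ[volume.restrict (Ioo (-π) π)] g') :
    (∀ f : ℝ → ℂ,
      (∃ g, MemLp g (ENNReal.ofReal q) (volume.restrict (Ioo (-π) π)) ∧
        f =ᵐ[volume.restrict (Ioo (-π) π)] T g) →
      (∃ g, MemLp g (ENNReal.ofReal p) (volume.restrict (Ioo (-π) π)) ∧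
        f =ᵐ[volume.restrict (Ioo (-π) π)] T g))
    ∧ (∃ C : ℝ≥0∞, C ≠ ⊤ ∧ ∀ g : ℝ → ℂ,
        eLpNorm g (ENNReal.ofReal p) (volume.restrict (Ioo (-π) π))
          ≤ C * eLpNorm g (ENNReal.ofReal q) (volume.restrict (Ioo (-π) π)))
    ∧ (∃ f : ℝ → ℂ,
        (∃ g, MemLp g (ENNReal.ofReal p) (volume.restrict (Ioo (-π) π)) ∧
          f =ᵐ[volume.restrict (Ioo (-π) π)] T g)
        ∧ ¬(∃ g, MemLp g (ENNReal.ofReal q) (volume.restrict (Ioo (-π) π)) ∧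
          f =ᵐ[volume.restrict (Ioo (-π) π)] T g)) :=
  stmt14_general α β p q hα hβ hpq hpE T hinj
end

section
/- Let α, β > -1 and let φ_n^{α,β} denote the Jacobi function on (0,π). Let f(θ) = sign(θ)·|sin(θ/2)|^{-α-1/2}(cos(θ/2))^{-β-1/2} on (-π,π). If p ∈ E(α,β) and α, β < 1/p - 1/2, then f ∈ L^p(-π,π) and the Jacobi–Dunkl derivative 𝔻_{α,β}f = f' - ((2α+1)/4 cot(θ/2) - (2β+1)/4 tan(θ/2))·f̌ vanishes identically on (-π,π)\{0}, so that f belongs to the first-order 'naive' Sobolev space 𝒲^{p,1}_{α,β} = {f ∈ L^p : 𝔻_{α,β}f ∈ L^p}. -/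
open MeasureTheory Set Real
open scoped ENNReal NNReal

/-- The Jacobi–Dunkl derivative
`𝔻_{α,β}f(θ) = f'(θ) - ((2α+1)/4 cot(θ/2) - (2β+1)/4 tan(θ/2)) f(-θ)`. -/
noncomputable def jacobiDunkl (α β : ℝ) (f : ℝ → ℝ) (θ : ℝ) : ℝ :=
  deriv f θ - ((2 * α + 1) / 4 * (Real.cos (θ / 2) / Real.sin (θ / 2))
    - (2 * β + 1) / 4 * Real.tan (θ / 2)) * f (-θ)

/-!
Write `g θ = sin (θ/2) ^ (-α-1/2) * cos (θ/2) ^ (-β-1/2)`. Its logarithmic derivative on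
`(0, π)` is `-((2α+1)/4 cot (θ/2) - (2β+1)/4 tan (θ/2))`, and `f` is the odd extension of `g`,
so `f (-θ) = -g θ` there and `𝔻 f = 0` on `(0, π)`. For an odd `f` the function `𝔻 f` is even,
which gives `(-π, 0)`.

Also `|f|^p = |sin (θ/2)| ^ r * |cos (θ/2)| ^ s` with `r, s > -1` exactly when
`α, β < 1/p - 1/2`. Near `0` one has `sin (θ/2) = θ · sinc (θ/2) / 2` with `sinc` continuous and
positive, so the singularity is that of `θ ^ r`; the reflections `θ ↦ -θ` and `θ ↦ π - θ` move the
other singularities to `0`.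
-/

lemma Real.measurable_sign : Measurable Real.sign :=
  Measurable.ite measurableSet_Iio measurable_const
    (Measurable.ite measurableSet_Ioi measurable_const measurable_const)

lemma jacobiDunkl_neg_of_odd {f : ℝ → ℝ} (hf : Function.Odd f) (α β θ : ℝ) :
    jacobiDunkl α β f (-θ) = jacobiDunkl α β f θ := by
  have hderiv : deriv f (-θ) = deriv f θ := by
    have h := deriv_comp_neg (f := f) (x := θ)
    rw [show (fun x => f (-x)) = -f from funext hf, deriv.neg, neg_inj] at h
    exact h.symm
  simp only [jacobiDunkl, hderiv, neg_neg, hf θ, neg_div, sin_neg, cos_neg, tan_neg, div_neg]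
  ring

lemma hasDerivAt_sin_half_rpow_mul_cos_half_rpow (r s : ℝ) {θ : ℝ} (hθ : θ ∈ Ioo 0 π) :
    HasDerivAt (fun x => sin (x / 2) ^ r * cos (x / 2) ^ s)
      ((r / 2 * (cos (θ / 2) / sin (θ / 2)) - s / 2 * tan (θ / 2))
        * (sin (θ / 2) ^ r * cos (θ / 2) ^ s)) θ := by
  have hsin : 0 < sin (θ / 2) :=
    sin_pos_of_pos_of_lt_pi (by linarith [hθ.1]) (by linarith [hθ.2, pi_pos])
  have hcos : 0 < cos (θ / 2) := cos_pos_of_mem_Ioo ⟨by linarith [hθ.1, pi_pos], by linarith [hθ.2]⟩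
  have hsin' : HasDerivAt (fun x => sin (x / 2)) (cos (θ / 2) / 2) θ := by
    simpa [div_eq_mul_inv] using ((hasDerivAt_id θ).div_const 2).sin
  have hcos' : HasDerivAt (fun x => cos (x / 2)) (-sin (θ / 2) / 2) θ := by
    simpa [div_eq_mul_inv] using ((hasDerivAt_id θ).div_const 2).cos
  refine ((hsin'.rpow_const (p := r) (Or.inl hsin.ne')).mul
    (hcos'.rpow_const (p := s) (Or.inl hcos.ne'))).congr_deriv ?_
  rw [tan_eq_sin_div_cos, rpow_sub_one hsin.ne', rpow_sub_one hcos.ne']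
  field_simp
  ring

lemma intervalIntegrable_abs_sin_half_rpow_mul_abs_cos_half_rpow_zero_pi_div_two {r : ℝ}
    (hr : -1 < r) (s : ℝ) :
    IntervalIntegrable (fun θ => |sin (θ / 2)| ^ r * |cos (θ / 2)| ^ s) volume 0 (π / 2) := by
  have hsinc : ∀ θ ∈ uIcc 0 (π / 2), sinc (θ / 2) ≠ 0 := by
    intro θ hθ
    rw [uIcc_of_le (by positivity)] at hθ
    rcases eq_or_lt_of_le hθ.1 with rfl | hθ0
    · simp
    · rw [sinc_of_ne_zero (by positivity)]
      exact div_ne_zero (sin_pos_of_pos_of_lt_pi (by positivity) (by linarith [hθ.2, pi_pos])).ne'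
        (by positivity)
  have hcos : ∀ θ ∈ uIcc 0 (π / 2), cos (θ / 2) ≠ 0 := by
    intro θ hθ
    rw [uIcc_of_le (by positivity)] at hθ
    exact (cos_pos_of_mem_Ioo ⟨by linarith [hθ.1, pi_pos], by linarith [hθ.2, pi_pos]⟩).ne'
  have hcont : ContinuousOn (fun θ => |sinc (θ / 2) / 2| ^ r * |cos (θ / 2)| ^ s)
      (uIcc 0 (π / 2)) :=
    ((by fun_prop : Continuous fun θ => |sinc (θ / 2) / 2|).continuousOn.rpow_const fun θ hθ =>
      Or.inl (by simpa using hsinc θ hθ)).mul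
    ((by fun_prop : Continuous fun θ => |cos (θ / 2)|).continuousOn.rpow_const fun θ hθ =>
      Or.inl (by simpa using hcos θ hθ))
  refine ((intervalIntegral.intervalIntegrable_rpow' hr).mul_continuousOn hcont).congr
    fun θ hθ => ?_
  rw [uIoc_of_le (by positivity)] at hθ
  have hsin : sin (θ / 2) = θ * (sinc (θ / 2) / 2) := by
    have hθ0 : θ ≠ 0 := hθ.1.ne'
    rw [sinc_of_ne_zero (by positivity)]
    field_simp
  simp only [hsin, abs_mul, abs_of_pos hθ.1, mul_rpow hθ.1.le (abs_nonneg _), mul_assoc]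

lemma intervalIntegrable_abs_sin_half_rpow_mul_abs_cos_half_rpow {r s : ℝ}
    (hr : -1 < r) (hs : -1 < s) :
    IntervalIntegrable (fun θ => |sin (θ / 2)| ^ r * |cos (θ / 2)| ^ s) volume (-π) π := by
  have hright : IntervalIntegrable (fun θ => |sin (θ / 2)| ^ r * |cos (θ / 2)| ^ s) volume
      (π / 2) π := by
    have h := (intervalIntegrable_abs_sin_half_rpow_mul_abs_cos_half_rpow_zero_pi_div_two hs r)
      |>.comp_sub_left π
    rw [sub_zero, show π - π / 2 = π / 2 by ring] at h
    refine h.symm.congr fun θ _ => ?_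
    simp only [sub_div, sin_pi_div_two_sub, cos_pi_div_two_sub, mul_comm]
  have h0π := (intervalIntegrable_abs_sin_half_rpow_mul_abs_cos_half_rpow_zero_pi_div_two hr s)
    |>.trans hright
  have hneg := (IntervalIntegrable.iff_comp_neg).mp h0π
  simp only [neg_zero, neg_div, sin_neg, cos_neg, abs_neg] at hneg
  exact hneg.symm.trans h0π

noncomputable def jacobiDunklKernelFn (α β θ : ℝ) : ℝ :=
  Real.sign θ * |Real.sin (θ / 2)| ^ (-α - 1 / 2) * Real.cos (θ / 2) ^ (-β - 1 / 2)

namespace jacobiDunklKernelFn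

variable {α β : ℝ}

lemma odd : Function.Odd (jacobiDunklKernelFn α β) := fun θ => by
  simp only [jacobiDunklKernelFn, Real.sign_neg, neg_div, sin_neg, cos_neg, abs_neg]
  ring

lemma measurable : Measurable (jacobiDunklKernelFn α β) := by
  unfold jacobiDunklKernelFn
  have := Real.measurable_sign
  fun_prop

lemma eqOn_Ioo_zero_pi :
    EqOn (jacobiDunklKernelFn α β)
      (fun x => sin (x / 2) ^ (-α - 1 / 2) * cos (x / 2) ^ (-β - 1 / 2)) (Ioo 0 π) := fun θ hθ => by
  have hsin : 0 < sin (θ / 2) :=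
    sin_pos_of_pos_of_lt_pi (by linarith [hθ.1]) (by linarith [hθ.2, pi_pos])
  simp only [jacobiDunklKernelFn, Real.sign_of_pos hθ.1, abs_of_pos hsin, one_mul]

lemma jacobiDunkl_eq_zero_of_mem_Ioo_zero_pi {θ : ℝ} (hθ : θ ∈ Ioo 0 π) :
    jacobiDunkl α β (jacobiDunklKernelFn α β) θ = 0 := by
  have hderiv := (hasDerivAt_sin_half_rpow_mul_cos_half_rpow (-α - 1 / 2) (-β - 1 / 2) hθ)
    |>.congr_of_eventuallyEq (eqOn_Ioo_zero_pi.eventuallyEq_of_mem (isOpen_Ioo.mem_nhds hθ))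
  rw [jacobiDunkl, hderiv.deriv, odd θ, eqOn_Ioo_zero_pi hθ]
  ring

lemma jacobiDunkl_eq_zero {θ : ℝ} (hθ : θ ∈ Ioo (-π) π \ {0}) :
    jacobiDunkl α β (jacobiDunklKernelFn α β) θ = 0 := by
  obtain ⟨⟨hπθ, hθπ⟩, hθ0⟩ := hθ
  rcases lt_or_gt_of_ne hθ0 with hneg | hpos
  · rw [← neg_neg θ, jacobiDunkl_neg_of_odd odd]
    exact jacobiDunkl_eq_zero_of_mem_Ioo_zero_pi ⟨by linarith, by linarith⟩
  · exact jacobiDunkl_eq_zero_of_mem_Ioo_zero_pi ⟨hpos, hθπ⟩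

lemma norm_rpow {p θ : ℝ} (hθ : θ ∈ Ioo (-π) π) (hθ0 : θ ≠ 0) :
    ‖jacobiDunklKernelFn α β θ‖ ^ p
      = |sin (θ / 2)| ^ (-(p * (α + 1 / 2))) * |cos (θ / 2)| ^ (-(p * (β + 1 / 2))) := by
  have hcos : 0 < cos (θ / 2) := cos_pos_of_mem_Ioo ⟨by linarith [hθ.1], by linarith [hθ.2]⟩
  have hsign : |Real.sign θ| = 1 := by
    rcases lt_or_gt_of_ne hθ0 with h | h <;> simp [Real.sign_of_neg, Real.sign_of_pos, h]
  rw [jacobiDunklKernelFn, Real.norm_eq_abs, abs_mul, abs_mul, hsign, one_mul,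
    abs_of_nonneg (rpow_nonneg (abs_nonneg _) _), abs_of_pos (rpow_pos_of_pos hcos _),
    mul_rpow (rpow_nonneg (abs_nonneg _) _) (rpow_nonneg hcos.le _),
    ← rpow_mul (abs_nonneg _), ← rpow_mul hcos.le, abs_of_pos hcos]
  ring_nf

lemma memLp {p : ℝ} (hαp : α < 1 / p - 1 / 2) (hβp : β < 1 / p - 1 / 2) :
    MemLp (jacobiDunklKernelFn α β) (ENNReal.ofReal p) (volume.restrict (Ioo (-π) π)) := by
  rcases le_or_gt p 0 with hp | hp
  -- `ENNReal.ofReal p = 0`, and membership in `L^0` is just measurability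
  · rw [ENNReal.ofReal_eq_zero.mpr hp, memLp_zero_iff_aestronglyMeasurable]
    exact measurable.aestronglyMeasurable
  rw [← integrable_norm_rpow_iff measurable.aestronglyMeasurable (by simpa using hp)
    ENNReal.ofReal_ne_top, ENNReal.toReal_ofReal hp.le]
  have hexp : ∀ γ < 1 / p - 1 / 2, -1 < -(p * (γ + 1 / 2)) := fun γ hγ => by
    have := mul_lt_mul_of_pos_left (show γ + 1 / 2 < 1 / p by linarith) hp
    rw [mul_one_div_cancel hp.ne'] at this
    linarith
  have hint := (intervalIntegrable_iff_integrableOn_Ioo_of_le (by linarith [pi_pos])).mp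
    (intervalIntegrable_abs_sin_half_rpow_mul_abs_cos_half_rpow (hexp α hαp) (hexp β hβp))
  refine hint.congr ?_
  filter_upwards [ae_restrict_mem measurableSet_Ioo, ae_restrict_of_ae (volume.ae_ne 0)]
    with θ hθ hθ0
  exact (norm_rpow hθ hθ0).symm

lemma memLp_jacobiDunkl (q : ℝ≥0∞) :
    MemLp (jacobiDunkl α β (jacobiDunklKernelFn α β)) q (volume.restrict (Ioo (-π) π)) := by
  refine MemLp.zero.ae_eq ?_
  filter_upwards [ae_restrict_mem measurableSet_Ioo, ae_restrict_of_ae (volume.ae_ne 0)]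
    with θ hθ hθ0
  exact (jacobiDunkl_eq_zero ⟨hθ, hθ0⟩).symm

end jacobiDunklKernelFn

theorem stmt17_general (α β p : ℝ) (hαp : α < 1 / p - 1 / 2) (hβp : β < 1 / p - 1 / 2)
    (f : ℝ → ℝ)
    (hf : f = fun θ => Real.sign θ * |Real.sin (θ / 2)| ^ (-α - 1 / 2)
      * Real.cos (θ / 2) ^ (-β - 1 / 2)) :
    MemLp f (ENNReal.ofReal p) (volume.restrict (Ioo (-π) π))
    ∧ (∀ θ ∈ Ioo (-π) π \ {0}, jacobiDunkl α β f θ = 0)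
    ∧ MemLp (jacobiDunkl α β f) (ENNReal.ofReal p) (volume.restrict (Ioo (-π) π)) := by
  obtain rfl : f = jacobiDunklKernelFn α β := hf
  exact ⟨jacobiDunklKernelFn.memLp hαp hβp, fun _ hθ => jacobiDunklKernelFn.jacobiDunkl_eq_zero hθ,
    jacobiDunklKernelFn.memLp_jacobiDunkl _⟩

/-- Let `α, β > -1`, `p ∈ E(α,β)`, `α, β < 1/p - 1/2`, and let
`f(θ) = sign(θ)|sin(θ/2)|^{-α-1/2}(cos(θ/2))^{-β-1/2}`.  Then `f ∈ L^p(-π,π)`, the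
Jacobi–Dunkl derivative `𝔻_{α,β}f` vanishes on `(-π,π)\{0}`, and hence `f` lies in the
naive first-order Sobolev space `𝒲^{p,1}_{α,β}` (i.e. `𝔻_{α,β}f ∈ L^p(-π,π)` as well). -/
theorem stmt17 (α β p : ℝ) (hα : -1 < α) (hβ : -1 < β)
    (hp : memEJ α β p) (hαp : α < 1 / p - 1 / 2) (hβp : β < 1 / p - 1 / 2)
    (f : ℝ → ℝ)
    (hf : f = fun θ => Real.sign θ * |Real.sin (θ / 2)| ^ (-α - 1 / 2)
      * Real.cos (θ / 2) ^ (-β - 1 / 2)) :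
    MemLp f (ENNReal.ofReal p) (volume.restrict (Ioo (-π) π))
    ∧ (∀ θ ∈ Ioo (-π) π \ {0}, jacobiDunkl α β f θ = 0)
    ∧ MemLp (jacobiDunkl α β f) (ENNReal.ofReal p) (volume.restrict (Ioo (-π) π)) :=
  stmt17_general α β p hαp hβp f hf
end
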